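/- In the forward LQ problem, if the Hamiltonian system x̄_{k+1} = A_k x̄_k + B_k ū_k + b_k + (C_k x̄_k + D_k ū_k + σ_k) w_k, ȳ_k = A_k^T ȳ'_{k+1} + C_k^T z̄'_{k+1} + Q_k x̄_k, x̄_0 = −M^{-1} ȳ_0, ȳ_N = G x̄_N, 0 = B_k^T ȳ'_{k+1} + D_k^T z̄'_{k+1} + R_k ū_k has a square-integrable adapted solution, then for any other initial state ξ and admissible control u with state process x, the cost difference satisfies J(0; ξ, u) − J(0; ξ̄, ū) = (1/2)E[ ⟨M(ξ−ξ̄), ξ−ξ̄⟩ + ⟨G(x_N−x̄_N), x_N−x̄_N⟩ + Σ_{k=0}^{N-1}( ⟨Q_k(x_k−x̄_k), x_k−x̄_k⟩ + ⟨R_k(u_k−ū_k), u_k−ū_k⟩ ) ] ≥ 0, so that ξ̄ = −M^{-1}ȳ_0 and ū_k = −R_k^{-1}(B_k^T ȳ'_{k+1} + D_k^T z̄'_{k+1}) form an optimal pair; and by strict positive definiteness of M and R_k the optimal pair is unique. -/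

import Mathlib

/-!
Put `δx = x - x̄` and `δu = u - ū`. Expanding the quadratic cost around `(x̄, ū)` gives
`J(ξ, u) - J(ξ̄, ū) = ½ E[q(δx, δu)] + E[c]`, where `q` is the quadratic form of the cost and
`c = ⟨M x̄₀, δx₀⟩ + ⟨G x̄_N, δx_N⟩ + Σ_k (⟨Q_k x̄_k, δx_k⟩ + ⟨R_k ū_k, δu_k⟩)` is the cross term.
The variation `(δx, δu)` solves the homogeneous state equation, so pulling the
`F_{k-1}`-measurable factors out of `E[⟨ȳ_{k+1}, δx_{k+1}⟩ | F_{k-1}]` and using the adjoint and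
stationarity equations yields
`E⟨ȳ_{k+1}, δx_{k+1}⟩ = E⟨ȳ_k, δx_k⟩ - E[⟨Q_k x̄_k, δx_k⟩ + ⟨R_k ū_k, δu_k⟩]`.
Telescoping, with `ȳ₀ = -M x̄₀` and `ȳ_N = G x̄_N`, makes `E[c]` vanish. Since `q ≥ 0` the pair
`(ξ̄, ū)` is optimal, and if the costs agree then `q(δx, δu) = 0` a.s., which forces `δx₀ = 0` and
`δu = 0` because `M` and `R_k` are positive definite.
-/

open MeasureTheory Matrix
noncomputable section

abbrev Vec (n : ℕ) := EuclideanSpace ℝ (Fin n)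

def ev {m : ℕ} (x : Fin m → ℝ) : Vec m := WithLp.toLp 2 x

/-- quadratic cost of the forward LQ problem:
`J(0; ξ, u) = ½ E[⟨Mx₀,x₀⟩ + ⟨Gx_N,x_N⟩ + Σ_{k<N}(⟨Q_k x_k,x_k⟩ + ⟨R_k u_k,u_k⟩)]`. -/
def Jcost (n m N : ℕ) (Ω : Type) [MeasurableSpace Ω] (P : Measure Ω)
    (M : Matrix (Fin n) (Fin n) ℝ) (Gm : Ω → Matrix (Fin n) (Fin n) ℝ)
    (Q : ℕ → Ω → Matrix (Fin n) (Fin n) ℝ) (R : ℕ → Ω → Matrix (Fin m) (Fin m) ℝ)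
    (x : ℕ → Ω → Vec n) (u : ℕ → Ω → Vec m) : ℝ :=
  (1 / 2) * ∫ ω, (M.mulVec (x 0 ω) ⬝ᵥ x 0 ω + (Gm ω).mulVec (x N ω) ⬝ᵥ x N ω
    + ∑ k ∈ Finset.range N,
        ((Q k ω).mulVec (x k ω) ⬝ᵥ x k ω + (R k ω).mulVec (u k ω) ⬝ᵥ u k ω)) ∂P

/-- the controlled forward dynamics
`x_{k+1} = A_k x_k + B_k u_k + b_k + (C_k x_k + D_k u_k + σ_k) w_k`, `x_0 = ξ`,
together with adaptedness and square-integrability of the pair `(x, u)`.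
`G k` plays the role of `F_{k-1}`. -/
def AdmissiblePair (n m N : ℕ) (Ω : Type) [MeasurableSpace Ω] (P : Measure Ω)
    (G : ℕ → MeasurableSpace Ω) (w : ℕ → Ω → ℝ)
    (A Cm : ℕ → Ω → Matrix (Fin n) (Fin n) ℝ)
    (B D : ℕ → Ω → Matrix (Fin n) (Fin m) ℝ)
    (bc σc : ℕ → Ω → Vec n)
    (ξ : Vec n) (u : ℕ → Ω → Vec m) (x : ℕ → Ω → Vec n) : Prop :=
  (∀ k, k ≤ N → Measurable[G k] (x k) ∧ MemLp (x k) 2 P) ∧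
  (∀ k, k < N → Measurable[G k] (u k) ∧ MemLp (u k) 2 P) ∧
  (x 0 = fun _ => ξ) ∧
  (∀ k, k < N → ∀ᵐ ω ∂P, x (k + 1) ω =
    ev ((A k ω).mulVec (x k ω)) + ev ((B k ω).mulVec (u k ω)) + bc k ω
    + w k ω • (ev ((Cm k ω).mulVec (x k ω)) + ev ((D k ω).mulVec (u k ω)) + σc k ω))

open scoped ENNReal

namespace MeasureTheory

variable {Ω : Type*} {m m0 : MeasurableSpace Ω} {P : Measure Ω}

theorem memLp_two_of_condExp_sq_ae_eq_one [NeZero P] {w : Ω → ℝ}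
    (hw : AEStronglyMeasurable w P) (h : P[fun ω => w ω ^ 2 | m] =ᵐ[P] 1) : MemLp w 2 P := by
  refine (memLp_two_iff_integrable_sq hw).2 (by_contra fun hni => ?_)
  rw [condExp_of_not_integrable hni] at h
  simpa using h.exists

theorem memLp_top_entry_of_abs_le {ι κ : Type*} {G : ℕ → MeasurableSpace Ω} (hG : ∀ k, G k ≤ m0)
    {S : ℕ → Ω → Matrix ι κ ℝ} (hS : ∀ k i j, Measurable[G k] fun ω => S k ω i j)
    (hb : ∃ c, ∀ k ω i j, |S k ω i j| ≤ c) (k : ℕ) (i : ι) (j : κ) :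
    MemLp (fun ω => S k ω i j) ∞ P :=
  let ⟨c, hc⟩ := hb
  memLp_top_of_bound ((hS k i j).mono (hG k) le_rfl).aestronglyMeasurable c
    (ae_of_all _ fun ω => hc k ω i j)

variable {ι κ : Type*} [Fintype ι] [Fintype κ]

theorem MemLp.euclideanSpace_apply {p : ℝ≥0∞} {f : Ω → EuclideanSpace ℝ ι} (hf : MemLp f p P)
    (i : ι) : MemLp (fun ω => f ω i) p P :=
  (EuclideanSpace.proj (𝕜 := ℝ) i).comp_memLp' hf

theorem MemLp.integrable_dotProduct {f g : Ω → EuclideanSpace ℝ ι} (hf : MemLp f 2 P)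
    (hg : MemLp g 2 P) : Integrable (fun ω => f ω ⬝ᵥ g ω) P :=
  integrable_finsetSum _ fun i _ =>
    (hf.euclideanSpace_apply i).integrable_mul (hg.euclideanSpace_apply i)

theorem MemLp.integrable_mulVec_dotProduct {S : Ω → Matrix κ ι ℝ}
    (hS : ∀ i j, MemLp (fun ω => S ω i j) ∞ P) {f : Ω → EuclideanSpace ℝ ι}
    {g : Ω → EuclideanSpace ℝ κ} (hf : MemLp f 2 P) (hg : MemLp g 2 P) :
    Integrable (fun ω => S ω *ᵥ f ω ⬝ᵥ g ω) P := by
  simp only [dotProduct, mulVec, Finset.sum_mul]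
  refine integrable_finsetSum _ fun i _ => integrable_finsetSum _ fun j _ => ?_
  simp only [mul_assoc]
  exact ((hf.euclideanSpace_apply j).integrable_mul (hg.euclideanSpace_apply i)).mul_of_top_right
    (hS i j)

theorem condExp_dotProduct_of_stronglyMeasurable_right {y v : Ω → EuclideanSpace ℝ ι}
    (hv : StronglyMeasurable[m] v) (hyv : Integrable (fun ω => y ω ⬝ᵥ v ω) P)
    (hy : Integrable y P) :
    P[fun ω => y ω ⬝ᵥ v ω | m] =ᵐ[P] fun ω => P[y | m] ω ⬝ᵥ v ω :=
  condExp_bilin_of_stronglyMeasurable_left (innerSL ℝ) hv hyv hy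

theorem condExp_dotProduct_of_ae_eq_add_smul [IsFiniteMeasure P]
    {y x v z : Ω → EuclideanSpace ℝ ι} {w : Ω → ℝ} (hy : MemLp y 2 P) (hx : MemLp x 2 P)
    (hw : MemLp w 2 P) (hv : StronglyMeasurable[m] v) (hz : StronglyMeasurable[m] z)
    (hyv : Integrable (fun ω => y ω ⬝ᵥ v ω) P) (hxvz : ∀ᵐ ω ∂P, x ω = v ω + w ω • z ω) :
    P[fun ω => y ω ⬝ᵥ x ω | m]
      =ᵐ[P] fun ω => P[y | m] ω ⬝ᵥ v ω + P[fun ω => w ω • y ω | m] ω ⬝ᵥ z ω := by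
  have hdot : ∀ᵐ ω ∂P, y ω ⬝ᵥ x ω = y ω ⬝ᵥ v ω + (w ω • y ω) ⬝ᵥ z ω := by
    filter_upwards [hxvz] with ω h
    simp only [h, WithLp.ofLp_add, WithLp.ofLp_smul, dotProduct_add, dotProduct_smul,
      smul_dotProduct]
  -- no integrability of `z` is needed: `(w • y) ⬝ z = y ⬝ x - y ⬝ v`
  have hwyz : Integrable (fun ω => (w ω • y ω) ⬝ᵥ z ω) P :=
    ((hy.integrable_dotProduct hx).sub hyv).congr (hdot.mono fun ω h => by
      simp only [Pi.sub_apply, h, add_sub_cancel_left])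
  calc P[fun ω => y ω ⬝ᵥ x ω | m]
      =ᵐ[P] P[(fun ω => y ω ⬝ᵥ v ω) + fun ω => (w ω • y ω) ⬝ᵥ z ω | m] := condExp_congr_ae hdot
    _ =ᵐ[P] P[fun ω => y ω ⬝ᵥ v ω | m] + P[fun ω => (w ω • y ω) ⬝ᵥ z ω | m] :=
      condExp_add hyv hwyz _
    _ =ᵐ[P] _ := (condExp_dotProduct_of_stronglyMeasurable_right hv hyv
      (hy.integrable one_le_two)).add (condExp_dotProduct_of_stronglyMeasurable_right hz hwyz
        (memLp_one_iff_integrable.1 (hy.smul hw)))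

end MeasureTheory

namespace Matrix

variable {ι κ : Type*} [Fintype ι] [Fintype κ]

theorem transpose_mulVec_dotProduct (S : Matrix ι κ ℝ) (a : ι → ℝ) (b : κ → ℝ) :
    Sᵀ *ᵥ a ⬝ᵥ b = a ⬝ᵥ S *ᵥ b := by
  rw [mulVec_transpose, dotProduct_mulVec]

theorem IsHermitian.mulVec_dotProduct_comm {S : Matrix ι ι ℝ} (hS : S.IsHermitian)
    (a b : ι → ℝ) : S *ᵥ a ⬝ᵥ b = S *ᵥ b ⬝ᵥ a := by
  rw [dotProduct_comm, ← transpose_mulVec_dotProduct, ← conjTranspose_eq_transpose_of_trivial,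
    hS.eq]

theorem PosSemidef.mulVec_dotProduct_self_nonneg {S : Matrix ι ι ℝ} (hS : S.PosSemidef)
    (p : ι → ℝ) : 0 ≤ S *ᵥ p ⬝ᵥ p := by
  simpa [dotProduct_comm] using hS.dotProduct_mulVec_nonneg p

theorem PosDef.eq_zero_of_mulVec_dotProduct_self_eq_zero {S : Matrix ι ι ℝ} (hS : S.PosDef)
    {p : ι → ℝ} (h : S *ᵥ p ⬝ᵥ p = 0) : p = 0 := by
  by_contra hp
  have := hS.dotProduct_mulVec_pos hp
  simp_all [dotProduct_comm]

theorem dotProduct_mulVec_add_eq_of_adjoint {A C : Matrix ι ι ℝ} {B D : Matrix ι κ ℝ}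
    {p p' y q dx : ι → ℝ} {r du : κ → ℝ}
    (hadj : y = Aᵀ *ᵥ p + Cᵀ *ᵥ p' + q) (hstat : 0 = Bᵀ *ᵥ p + Dᵀ *ᵥ p' + r) :
    p ⬝ᵥ (A *ᵥ dx + B *ᵥ du) + p' ⬝ᵥ (C *ᵥ dx + D *ᵥ du) = y ⬝ᵥ dx - (q ⬝ᵥ dx + r ⬝ᵥ du) := by
  have h := congrArg (· ⬝ᵥ du) hstat
  simp only [zero_dotProduct, add_dotProduct, transpose_mulVec_dotProduct] at h
  simp only [hadj, add_dotProduct, dotProduct_add, transpose_mulVec_dotProduct]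
  linarith

end Matrix

theorem Measurable.matrix_mulVec {Ω ι κ : Type*} [Fintype κ] {m : MeasurableSpace Ω}
    {S : Ω → Matrix ι κ ℝ} {f : Ω → κ → ℝ} (hS : ∀ i j, Measurable fun ω => S ω i j)
    (hf : Measurable f) : Measurable fun ω => S ω *ᵥ f ω :=
  measurable_pi_iff.2 fun i => Finset.measurable_sum _ fun j _ =>
    (hS i j).mul ((measurable_pi_apply j).comp hf)

section ForwardLQ

variable {n m N : ℕ} {Ω : Type}

/-- Polarisation of the integrand of `Jcost`: `Jcost … x u = ½ ∫ costForm … x x u u`. -/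
def costForm (N : ℕ) (M : Matrix (Fin n) (Fin n) ℝ) (Gm : Ω → Matrix (Fin n) (Fin n) ℝ)
    (Q : ℕ → Ω → Matrix (Fin n) (Fin n) ℝ) (R : ℕ → Ω → Matrix (Fin m) (Fin m) ℝ)
    (x x' : ℕ → Ω → Vec n) (u u' : ℕ → Ω → Vec m) (ω : Ω) : ℝ :=
  M *ᵥ x 0 ω ⬝ᵥ x' 0 ω + Gm ω *ᵥ x N ω ⬝ᵥ x' N ω
    + ∑ k ∈ Finset.range N, (Q k ω *ᵥ x k ω ⬝ᵥ x' k ω + R k ω *ᵥ u k ω ⬝ᵥ u' k ω)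

variable {M : Matrix (Fin n) (Fin n) ℝ} {Gm : Ω → Matrix (Fin n) (Fin n) ℝ}
  {Q : ℕ → Ω → Matrix (Fin n) (Fin n) ℝ} {R : ℕ → Ω → Matrix (Fin m) (Fin m) ℝ} {ω : Ω}

theorem costForm_self_eq (hM : M.IsHermitian) (hGm : (Gm ω).IsHermitian)
    (hQ : ∀ k, (Q k ω).IsHermitian) (hR : ∀ k, (R k ω).IsHermitian)
    (x xb : ℕ → Ω → Vec n) (u ub : ℕ → Ω → Vec m) :
    costForm N M Gm Q R x x u u ω = costForm N M Gm Q R (x - xb) (x - xb) (u - ub) (u - ub) ω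
      + 2 * costForm N M Gm Q R xb (x - xb) ub (u - ub) ω + costForm N M Gm Q R xb xb ub ub ω := by
  simp only [costForm, Pi.sub_apply, WithLp.ofLp_sub, mulVec_sub, dotProduct_sub, sub_dotProduct,
    hM.mulVec_dotProduct_comm (xb 0 ω), hGm.mulVec_dotProduct_comm (xb N ω),
    fun k => (hQ k).mulVec_dotProduct_comm (xb k ω),
    fun k => (hR k).mulVec_dotProduct_comm (ub k ω),
    Finset.sum_add_distrib, Finset.sum_sub_distrib]
  ring

theorem costForm_self_nonneg (hM : M.PosSemidef) (hGm : (Gm ω).PosSemidef)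
    (hQ : ∀ k, (Q k ω).PosSemidef) (hR : ∀ k, (R k ω).PosSemidef)
    (x : ℕ → Ω → Vec n) (u : ℕ → Ω → Vec m) : 0 ≤ costForm N M Gm Q R x x u u ω :=
  add_nonneg (add_nonneg (hM.mulVec_dotProduct_self_nonneg _) (hGm.mulVec_dotProduct_self_nonneg _))
    (Finset.sum_nonneg fun k _ => add_nonneg ((hQ k).mulVec_dotProduct_self_nonneg _)
      ((hR k).mulVec_dotProduct_self_nonneg _))

theorem eq_zero_of_costForm_self_eq_zero (hM : M.PosDef) (hGm : (Gm ω).PosSemidef)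
    (hQ : ∀ k, (Q k ω).PosSemidef) (hR : ∀ k, (R k ω).PosDef)
    {x : ℕ → Ω → Vec n} {u : ℕ → Ω → Vec m} (h : costForm N M Gm Q R x x u u ω = 0) :
    x 0 ω = 0 ∧ ∀ k < N, u k ω = 0 := by
  have hQx := fun k => (hQ k).mulVec_dotProduct_self_nonneg (x k ω)
  have hRu := fun k => (hR k).posSemidef.mulVec_dotProduct_self_nonneg (u k ω)
  have hQR : ∀ k ∈ Finset.range N, 0 ≤ Q k ω *ᵥ x k ω ⬝ᵥ x k ω + R k ω *ᵥ u k ω ⬝ᵥ u k ω :=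
    fun k _ => add_nonneg (hQx k) (hRu k)
  have hMx := hM.posSemidef.mulVec_dotProduct_self_nonneg (x 0 ω)
  have hGx := hGm.mulVec_dotProduct_self_nonneg (x N ω)
  have hsum := Finset.sum_nonneg hQR
  unfold costForm at h
  refine ⟨WithLp.ofLp_injective 2 (hM.eq_zero_of_mulVec_dotProduct_self_eq_zero (by linarith)),
    fun k hk => WithLp.ofLp_injective 2 ((hR k).eq_zero_of_mulVec_dotProduct_self_eq_zero ?_)⟩
  have hk := (Finset.sum_eq_zero_iff_of_nonneg hQR).1 (by linarith) k (Finset.mem_range.2 hk)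
  linarith [hQx k, hRu k]

variable [m0 : MeasurableSpace Ω] {P : Measure Ω}

theorem AdmissiblePair.sub {G : ℕ → MeasurableSpace Ω} {w : ℕ → Ω → ℝ}
    {A Cm : ℕ → Ω → Matrix (Fin n) (Fin n) ℝ} {B D : ℕ → Ω → Matrix (Fin n) (Fin m) ℝ}
    {bc σc : ℕ → Ω → Vec n} {ξ ξb : Vec n} {u ub : ℕ → Ω → Vec m} {x xb : ℕ → Ω → Vec n}
    (h : AdmissiblePair n m N Ω P G w A Cm B D bc σc ξ u x)
    (hb : AdmissiblePair n m N Ω P G w A Cm B D bc σc ξb ub xb) :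
    AdmissiblePair n m N Ω P G w A Cm B D 0 0 (ξ - ξb) (u - ub) (x - xb) := by
  obtain ⟨hx, hu, hx0, hdyn⟩ := h
  obtain ⟨hxb, hub, hxb0, hdynb⟩ := hb
  refine ⟨fun k hk => ⟨(hx k hk).1.sub (hxb k hk).1, (hx k hk).2.sub (hxb k hk).2⟩,
    fun k hk => ⟨(hu k hk).1.sub (hub k hk).1, (hu k hk).2.sub (hub k hk).2⟩,
    by rw [Pi.sub_apply, hx0, hxb0]; rfl, fun k hk => ?_⟩
  filter_upwards [hdyn k hk, hdynb k hk] with ω h hb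
  simp only [Pi.sub_apply, Pi.zero_apply, h, hb, ev, WithLp.ofLp_sub, mulVec_sub, WithLp.toLp_sub]
  module

theorem integrable_costForm (hGm : ∀ i j, MemLp (fun ω => Gm ω i j) ∞ P)
    (hQ : ∀ k i j, MemLp (fun ω => Q k ω i j) ∞ P) (hR : ∀ k i j, MemLp (fun ω => R k ω i j) ∞ P)
    {x x' : ℕ → Ω → Vec n} {u u' : ℕ → Ω → Vec m}
    (hx : ∀ k ≤ N, MemLp (x k) 2 P) (hx' : ∀ k ≤ N, MemLp (x' k) 2 P)
    (hu : ∀ k < N, MemLp (u k) 2 P) (hu' : ∀ k < N, MemLp (u' k) 2 P) :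
    Integrable (costForm N M Gm Q R x x' u u') P := by
  refine ((MemLp.integrable_mulVec_dotProduct (fun i j => memLp_top_const (M i j))
    (hx 0 N.zero_le) (hx' 0 N.zero_le)).add (MemLp.integrable_mulVec_dotProduct hGm
    (hx N le_rfl) (hx' N le_rfl))).add (integrable_finsetSum _ fun k hk => ?_)
  have hk : k < N := Finset.mem_range.1 hk
  exact (MemLp.integrable_mulVec_dotProduct (hQ k) (hx k hk.le) (hx' k hk.le)).add
    (MemLp.integrable_mulVec_dotProduct (hR k) (hu k hk) (hu' k hk))

theorem integral_dotProduct_succ_eq_of_adjoint [IsFiniteMeasure P] {G : ℕ → MeasurableSpace Ω}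
    (hG : ∀ k, G k ≤ m0) {w : ℕ → Ω → ℝ} {A Cm : ℕ → Ω → Matrix (Fin n) (Fin n) ℝ}
    {B D : ℕ → Ω → Matrix (Fin n) (Fin m) ℝ} {ξ : Vec n} {u : ℕ → Ω → Vec m}
    {x : ℕ → Ω → Vec n} (hvar : AdmissiblePair n m N Ω P G w A Cm B D 0 0 ξ u x)
    {k : ℕ} (hk : k < N) (hw : MemLp (w k) 2 P)
    (hA : ∀ i j, Measurable[G k] fun ω => A k ω i j)
    (hCm : ∀ i j, Measurable[G k] fun ω => Cm k ω i j)
    (hB : ∀ i j, Measurable[G k] fun ω => B k ω i j)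
    (hD : ∀ i j, Measurable[G k] fun ω => D k ω i j)
    (hAbd : ∀ i j, MemLp (fun ω => A k ω i j) ∞ P) (hBbd : ∀ i j, MemLp (fun ω => B k ω i j) ∞ P)
    {y : ℕ → Ω → Vec n} (hy : MemLp (y (k + 1)) 2 P) {q : Ω → Vec n} {r : Ω → Vec m}
    (hadj : ∀ᵐ ω ∂P, y k ω =
      ev ((A k ω)ᵀ.mulVec ((P[y (k + 1) | G k]) ω))
      + ev ((Cm k ω)ᵀ.mulVec ((P[fun ω' => w k ω' • y (k + 1) ω' | G k]) ω)) + q ω)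
    (hstat : ∀ᵐ ω ∂P, (0 : Vec m) =
      ev ((B k ω)ᵀ.mulVec ((P[y (k + 1) | G k]) ω))
      + ev ((D k ω)ᵀ.mulVec ((P[fun ω' => w k ω' • y (k + 1) ω' | G k]) ω)) + r ω) :
    ∫ ω, y (k + 1) ω ⬝ᵥ x (k + 1) ω ∂P
      = ∫ ω, (y k ω ⬝ᵥ x k ω - (q ω ⬝ᵥ x k ω + r ω ⬝ᵥ u k ω)) ∂P := by
  obtain ⟨hx, hu, -, hdyn⟩ := hvar
  obtain ⟨hxk, hxk2⟩ := hx k hk.le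
  obtain ⟨huk, huk2⟩ := hu k hk
  set v : Ω → Vec n := fun ω => ev (A k ω *ᵥ x k ω + B k ω *ᵥ u k ω) with hv_def
  set z : Ω → Vec n := fun ω => ev (Cm k ω *ᵥ x k ω + D k ω *ᵥ u k ω) with hz_def
  have hGmeas : ∀ {S : Ω → Matrix (Fin n) (Fin n) ℝ} {T : Ω → Matrix (Fin n) (Fin m) ℝ},
      (∀ i j, Measurable[G k] fun ω => S ω i j) → (∀ i j, Measurable[G k] fun ω => T ω i j) →
      StronglyMeasurable[G k] fun ω => ev (S ω *ᵥ x k ω + T ω *ᵥ u k ω) := fun hS hT =>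
    ((WithLp.measurable_toLp 2 _).comp
      ((Measurable.matrix_mulVec hS ((WithLp.measurable_ofLp 2 _).comp hxk)).add
        (Measurable.matrix_mulVec hT ((WithLp.measurable_ofLp 2 _).comp huk)))).stronglyMeasurable
  have hv : StronglyMeasurable[G k] v := hGmeas hA hB
  have hz : StronglyMeasurable[G k] z := hGmeas hCm hD
  have hxvz : ∀ᵐ ω ∂P, x (k + 1) ω = v ω + w k ω • z ω := by
    filter_upwards [hdyn k hk] with ω h
    simp only [h, hv_def, hz_def, ev, Pi.zero_apply, add_zero, WithLp.toLp_add]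
  have hyv : Integrable (fun ω => y (k + 1) ω ⬝ᵥ v ω) P := by
    simp only [hv_def, ev, WithLp.ofLp_toLp, dotProduct_comm (y (k + 1) _), add_dotProduct]
    exact (MemLp.integrable_mulVec_dotProduct hAbd hxk2 hy).add
      (MemLp.integrable_mulVec_dotProduct hBbd huk2 hy)
  have hcond := condExp_dotProduct_of_ae_eq_add_smul hy (hx (k + 1) hk).2 hw hv hz hyv hxvz
  rw [← integral_condExp (hG k)]
  refine integral_congr_ae (hcond.trans ?_)
  filter_upwards [hadj, hstat] with ω h1 h2
  exact dotProduct_mulVec_add_eq_of_adjoint (congrArg WithLp.ofLp h1) (congrArg WithLp.ofLp h2)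

theorem integral_costForm_eq_zero_of_hamiltonian [IsFiniteMeasure P] {G : ℕ → MeasurableSpace Ω}
    (hG : ∀ k, G k ≤ m0) {w : ℕ → Ω → ℝ} (hw : ∀ k, MemLp (w k) 2 P)
    {A Cm : ℕ → Ω → Matrix (Fin n) (Fin n) ℝ} {B D : ℕ → Ω → Matrix (Fin n) (Fin m) ℝ}
    (hA : ∀ k i j, Measurable[G k] fun ω => A k ω i j)
    (hCm : ∀ k i j, Measurable[G k] fun ω => Cm k ω i j)
    (hB : ∀ k i j, Measurable[G k] fun ω => B k ω i j)
    (hD : ∀ k i j, Measurable[G k] fun ω => D k ω i j)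
    (hAbd : ∀ k i j, MemLp (fun ω => A k ω i j) ∞ P)
    (hBbd : ∀ k i j, MemLp (fun ω => B k ω i j) ∞ P)
    (hGmbd : ∀ i j, MemLp (fun ω => Gm ω i j) ∞ P)
    (hQbd : ∀ k i j, MemLp (fun ω => Q k ω i j) ∞ P)
    (hRbd : ∀ k i j, MemLp (fun ω => R k ω i j) ∞ P)
    {xb yb : ℕ → Ω → Vec n} {ub : ℕ → Ω → Vec m}
    (hxb : ∀ k ≤ N, MemLp (xb k) 2 P) (hub : ∀ k < N, MemLp (ub k) 2 P)
    (hyb : ∀ k ≤ N, MemLp (yb k) 2 P)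
    (hinit : ∀ᵐ ω ∂P, M *ᵥ xb 0 ω = -yb 0 ω)
    (hbwd : ∀ k, k < N → ∀ᵐ ω ∂P, yb k ω =
      ev ((A k ω)ᵀ.mulVec ((P[yb (k + 1) | G k]) ω))
      + ev ((Cm k ω)ᵀ.mulVec ((P[fun ω' => w k ω' • yb (k + 1) ω' | G k]) ω))
      + ev ((Q k ω).mulVec (xb k ω)))
    (hterm : ∀ᵐ ω ∂P, yb N ω = ev ((Gm ω).mulVec (xb N ω)))
    (hstat : ∀ k, k < N → ∀ᵐ ω ∂P, (0 : Vec m) =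
      ev ((B k ω)ᵀ.mulVec ((P[yb (k + 1) | G k]) ω))
      + ev ((D k ω)ᵀ.mulVec ((P[fun ω' => w k ω' • yb (k + 1) ω' | G k]) ω))
      + ev ((R k ω).mulVec (ub k ω)))
    {ξ : Vec n} {u : ℕ → Ω → Vec m} {x : ℕ → Ω → Vec n}
    (hvar : AdmissiblePair n m N Ω P G w A Cm B D 0 0 ξ u x) :
    ∫ ω, costForm N M Gm Q R xb x ub u ω ∂P = 0 := by
  set F : ℕ → ℝ := fun k => ∫ ω, yb k ω ⬝ᵥ x k ω ∂P with hF_def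
  have hx : ∀ k ≤ N, MemLp (x k) 2 P := fun k hk => (hvar.1 k hk).2
  have hF : ∀ k ≤ N, Integrable (fun ω => yb k ω ⬝ᵥ x k ω) P := fun k hk =>
    (hyb k hk).integrable_dotProduct (hx k hk)
  have hc : ∀ k ∈ Finset.range N,
      Integrable (fun ω => Q k ω *ᵥ xb k ω ⬝ᵥ x k ω + R k ω *ᵥ ub k ω ⬝ᵥ u k ω) P :=
    fun k hk => have hk := Finset.mem_range.1 hk
      (MemLp.integrable_mulVec_dotProduct (hQbd k) (hxb k hk.le) (hx k hk.le)).add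
        (MemLp.integrable_mulVec_dotProduct (hRbd k) (hub k hk) (hvar.2.1 k hk).2)
  have hstep : ∀ k ∈ Finset.range N,
      ∫ ω, (Q k ω *ᵥ xb k ω ⬝ᵥ x k ω + R k ω *ᵥ ub k ω ⬝ᵥ u k ω) ∂P = F k - F (k + 1) := by
    intro k hk'
    have hk := Finset.mem_range.1 hk'
    have h := integral_dotProduct_succ_eq_of_adjoint hG hvar hk (hw k) (hA k) (hCm k) (hB k)
      (hD k) (hAbd k) (hBbd k) (hyb (k + 1) hk) (hbwd k hk) (hstat k hk)
    simp only [ev, WithLp.ofLp_toLp] at h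
    rw [integral_sub (hF k hk.le) (hc k hk')] at h
    simp only [hF_def, h]
    ring
  have h0 : ∫ ω, M *ᵥ xb 0 ω ⬝ᵥ x 0 ω ∂P = -F 0 := by
    rw [← integral_neg]
    exact integral_congr_ae (hinit.mono fun ω h => by simp only [h, neg_dotProduct])
  have hN : ∫ ω, Gm ω *ᵥ xb N ω ⬝ᵥ x N ω ∂P = F N :=
    integral_congr_ae (hterm.mono fun ω h => by simp only [h, ev, WithLp.ofLp_toLp])
  have I0 := MemLp.integrable_mulVec_dotProduct (fun i j => memLp_top_const (M i j))
    (hxb 0 N.zero_le) (hx 0 N.zero_le)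
  have IN := MemLp.integrable_mulVec_dotProduct hGmbd (hxb N le_rfl) (hx N le_rfl)
  unfold costForm
  rw [integral_add (I0.fun_add IN) (integrable_finsetSum _ hc), integral_add I0 IN, h0, hN,
    integral_finsetSum _ hc, Finset.sum_congr rfl hstep, Finset.sum_range_sub']
  ring

theorem Jcost_sub_Jcost_eq (hM : M.IsHermitian) (hGm : ∀ ω, (Gm ω).IsHermitian)
    (hQ : ∀ k ω, (Q k ω).IsHermitian) (hR : ∀ k ω, (R k ω).IsHermitian)
    (hGmbd : ∀ i j, MemLp (fun ω => Gm ω i j) ∞ P)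
    (hQbd : ∀ k i j, MemLp (fun ω => Q k ω i j) ∞ P)
    (hRbd : ∀ k i j, MemLp (fun ω => R k ω i j) ∞ P)
    {x xb : ℕ → Ω → Vec n} {u ub : ℕ → Ω → Vec m}
    (hx : ∀ k ≤ N, MemLp (x k) 2 P) (hxb : ∀ k ≤ N, MemLp (xb k) 2 P)
    (hu : ∀ k < N, MemLp (u k) 2 P) (hub : ∀ k < N, MemLp (ub k) 2 P)
    (hcross : ∫ ω, costForm N M Gm Q R xb (x - xb) ub (u - ub) ω ∂P = 0) :
    Jcost n m N Ω P M Gm Q R x u - Jcost n m N Ω P M Gm Q R xb ub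
      = 1 / 2 * ∫ ω, costForm N M Gm Q R (x - xb) (x - xb) (u - ub) (u - ub) ω ∂P := by
  have hdx : ∀ k ≤ N, MemLp ((x - xb) k) 2 P := fun k hk => (hx k hk).sub (hxb k hk)
  have hdu : ∀ k < N, MemLp ((u - ub) k) 2 P := fun k hk => (hu k hk).sub (hub k hk)
  have Iδ := integrable_costForm (M := M) hGmbd hQbd hRbd hdx hdx hdu hdu
  have Ic := (integrable_costForm (M := M) hGmbd hQbd hRbd hxb hdx hub hdu).const_mul 2
  have Ib := integrable_costForm (M := M) hGmbd hQbd hRbd hxb hxb hub hub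
  change 1 / 2 * ∫ ω, costForm N M Gm Q R x x u u ω ∂P
    - 1 / 2 * ∫ ω, costForm N M Gm Q R xb xb ub ub ω ∂P = _
  rw [integral_congr_ae (ae_of_all _ fun ω =>
      costForm_self_eq hM (hGm ω) (hQ · ω) (hR · ω) x xb u ub),
    integral_add (Iδ.fun_add Ic) Ib, integral_add Iδ Ic, integral_const_mul, hcross]
  ring

theorem ae_eq_zero_of_integral_costForm_self_eq_zero (hM : M.PosDef)
    (hGm : ∀ ω, (Gm ω).PosSemidef) (hQ : ∀ k ω, (Q k ω).PosSemidef) (hR : ∀ k ω, (R k ω).PosDef)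
    {x : ℕ → Ω → Vec n} {u : ℕ → Ω → Vec m} (hint : Integrable (costForm N M Gm Q R x x u u) P)
    (h : ∫ ω, costForm N M Gm Q R x x u u ω ∂P = 0) :
    (∀ᵐ ω ∂P, x 0 ω = 0) ∧ ∀ k < N, u k =ᵐ[P] 0 := by
  have hzero := ((integral_eq_zero_iff_of_nonneg (fun ω => costForm_self_nonneg hM.posSemidef
    (hGm ω) (hQ · ω) (fun k => (hR k ω).posSemidef) x u) hint).1 h).mono fun ω hω =>
      eq_zero_of_costForm_self_eq_zero hM (hGm ω) (hQ · ω) (hR · ω) hω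
  exact ⟨hzero.mono fun ω h => h.1, fun k hk => hzero.mono fun ω h => h.2 k hk⟩

end ForwardLQ

theorem stmt14_general (n m N : ℕ)
    {Ω : Type} [m0 : MeasurableSpace Ω] (P : Measure Ω) [IsProbabilityMeasure P]
    (G : ℕ → MeasurableSpace Ω) (hGle : ∀ k, G k ≤ m0)
    (w : ℕ → Ω → ℝ)
    (hwmeas : ∀ k, Measurable[G (k + 1)] (w k))
    (hw1 : ∀ k, P[fun ω => w k ω ^ 2 | G k] =ᵐ[P] 1)
    (A Cm : ℕ → Ω → Matrix (Fin n) (Fin n) ℝ)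
    (B D : ℕ → Ω → Matrix (Fin n) (Fin m) ℝ)
    (Q : ℕ → Ω → Matrix (Fin n) (Fin n) ℝ) (R : ℕ → Ω → Matrix (Fin m) (Fin m) ℝ)
    (M : Matrix (Fin n) (Fin n) ℝ) (Gm : Ω → Matrix (Fin n) (Fin n) ℝ)
    (bc σc : ℕ → Ω → Vec n)
    -- adaptedness / boundedness / integrability of the coefficients
    (hAmeas : ∀ k i j, Measurable[G k] (fun ω => A k ω i j))
    (hCmmeas : ∀ k i j, Measurable[G k] (fun ω => Cm k ω i j))
    (hBmeas : ∀ k i j, Measurable[G k] (fun ω => B k ω i j))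
    (hDmeas : ∀ k i j, Measurable[G k] (fun ω => D k ω i j))
    (hQmeas : ∀ k i j, Measurable[G k] (fun ω => Q k ω i j))
    (hRmeas : ∀ k i j, Measurable[G k] (fun ω => R k ω i j))
    (hGmmeas : ∀ i j, Measurable[G N] (fun ω => Gm ω i j))
    (hAbd : ∃ c, ∀ k ω i j, |A k ω i j| ≤ c)
    (hBbd : ∃ c, ∀ k ω i j, |B k ω i j| ≤ c)
    (hQbd : ∃ c, ∀ k ω i j, |Q k ω i j| ≤ c) (hRbd : ∃ c, ∀ k ω i j, |R k ω i j| ≤ c)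
    (hGmbd : ∃ c, ∀ ω i j, |Gm ω i j| ≤ c)
    -- definiteness assumptions (Assumption 4.1)
    (hM : M.PosDef)
    (hGm : ∀ ω, (Gm ω).PosSemidef)
    (hQ : ∀ k ω, (Q k ω).PosSemidef)
    (hR : ∃ δ > (0:ℝ), ∀ k ω, (R k ω - δ • 1).PosSemidef)
    -- the solution of the Hamiltonian system (4.6)
    (xb yb : ℕ → Ω → Vec n) (ub : ℕ → Ω → Vec m) (ξb : Vec n)
    (hybad : ∀ k, k ≤ N → Measurable[G k] (yb k) ∧ MemLp (yb k) 2 P)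
    (hadm : AdmissiblePair n m N Ω P G w A Cm B D bc σc ξb ub xb)
    (hinit : ∀ᵐ ω ∂P, xb 0 ω = -ev (M⁻¹.mulVec (yb 0 ω)))
    (hbwd : ∀ k, k < N → ∀ᵐ ω ∂P, yb k ω =
      ev ((A k ω)ᵀ.mulVec ((P[yb (k + 1) | G k]) ω))
      + ev ((Cm k ω)ᵀ.mulVec ((P[fun ω' => w k ω' • yb (k + 1) ω' | G k]) ω))
      + ev ((Q k ω).mulVec (xb k ω)))
    (hterm : ∀ᵐ ω ∂P, yb N ω = ev ((Gm ω).mulVec (xb N ω)))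
    (hstat : ∀ k, k < N → ∀ᵐ ω ∂P, (0 : Vec m) =
      ev ((B k ω)ᵀ.mulVec ((P[yb (k + 1) | G k]) ω))
      + ev ((D k ω)ᵀ.mulVec ((P[fun ω' => w k ω' • yb (k + 1) ω' | G k]) ω))
      + ev ((R k ω).mulVec (ub k ω))) :
    -- conclusion: cost-difference identity, optimality, and uniqueness
    (∀ (ξ : Vec n) (u : ℕ → Ω → Vec m) (x : ℕ → Ω → Vec n),
      AdmissiblePair n m N Ω P G w A Cm B D bc σc ξ u x →
      Jcost n m N Ω P M Gm Q R x u - Jcost n m N Ω P M Gm Q R xb ub =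
        (1 / 2) * ∫ ω,
          (M.mulVec (x 0 ω - xb 0 ω) ⬝ᵥ (x 0 ω - xb 0 ω)
          + (Gm ω).mulVec (x N ω - xb N ω) ⬝ᵥ (x N ω - xb N ω)
          + ∑ k ∈ Finset.range N,
              ((Q k ω).mulVec (x k ω - xb k ω) ⬝ᵥ (x k ω - xb k ω)
              + (R k ω).mulVec (u k ω - ub k ω) ⬝ᵥ (u k ω - ub k ω))) ∂P
      ∧ Jcost n m N Ω P M Gm Q R xb ub ≤ Jcost n m N Ω P M Gm Q R x u)
    ∧ (∀ (ξ : Vec n) (u : ℕ → Ω → Vec m) (x : ℕ → Ω → Vec n),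
      AdmissiblePair n m N Ω P G w A Cm B D bc σc ξ u x →
      Jcost n m N Ω P M Gm Q R x u = Jcost n m N Ω P M Gm Q R xb ub →
      ξ = ξb ∧ ∀ k, k < N → u k =ᵐ[P] ub k) := by
  obtain ⟨δ, hδ, hRδ⟩ := hR
  have hRpd : ∀ k ω, (R k ω).PosDef := fun k ω => by
    simpa using PosDef.posSemidef_add (hRδ k ω) (PosDef.one.smul hδ)
  have hw2 : ∀ k, MemLp (w k) 2 P := fun k => memLp_two_of_condExp_sq_ae_eq_one
    ((hwmeas k).mono (hGle (k + 1)) le_rfl).aestronglyMeasurable (hw1 k)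
  have hAL := memLp_top_entry_of_abs_le (P := P) hGle hAmeas hAbd
  have hBL := memLp_top_entry_of_abs_le (P := P) hGle hBmeas hBbd
  have hQL := memLp_top_entry_of_abs_le (P := P) hGle hQmeas hQbd
  have hRL := memLp_top_entry_of_abs_le (P := P) hGle hRmeas hRbd
  have hGmL := memLp_top_entry_of_abs_le (P := P) (G := fun _ => G N) (S := fun _ => Gm)
    (fun _ => hGle N) (fun _ => hGmmeas) (hGmbd.imp fun _ h _ => h) 0
  have hMxb : ∀ᵐ ω ∂P, M *ᵥ xb 0 ω = -yb 0 ω := hinit.mono fun ω h => by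
    simp [h, ev, mulVec_neg, mulVec_mulVec,
      mul_nonsing_inv _ ((isUnit_iff_isUnit_det M).1 hM.isUnit)]
  have hxb := fun k hk => (hadm.1 k hk).2
  have hub := fun k hk => (hadm.2.1 k hk).2
  have hcost := fun ξ u x (h : AdmissiblePair n m N Ω P G w A Cm B D bc σc ξ u x) =>
    Jcost_sub_Jcost_eq hM.isHermitian (hGm · |>.isHermitian) (hQ · · |>.isHermitian)
      (hRpd · · |>.isHermitian) hGmL hQL hRL (fun k hk => (h.1 k hk).2) hxb
      (fun k hk => (h.2.1 k hk).2) hub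
      (integral_costForm_eq_zero_of_hamiltonian hGle hw2 hAmeas hCmmeas hBmeas hDmeas hAL hBL hGmL
        hQL hRL hxb hub (fun k hk => (hybad k hk).2) hMxb hbwd hterm hstat (h.sub hadm))
  refine ⟨fun ξ u x h => ⟨hcost ξ u x h, ?_⟩, fun ξ u x h heq => ?_⟩
  · have := integral_nonneg (μ := P) (f := costForm N M Gm Q R (x - xb) (x - xb) (u - ub) (u - ub))
      fun ω => costForm_self_nonneg hM.posSemidef (hGm ω) (hQ · ω) (hRpd · ω |>.posSemidef) _ _
    linarith [hcost ξ u x h]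
  · have hvar := h.sub hadm
    obtain ⟨h0, hu⟩ := ae_eq_zero_of_integral_costForm_self_eq_zero hM hGm hQ hRpd
      (integrable_costForm hGmL hQL hRL (fun k hk => (hvar.1 k hk).2) (fun k hk => (hvar.1 k hk).2)
        (fun k hk => (hvar.2.1 k hk).2) (fun k hk => (hvar.2.1 k hk).2))
      (by linarith [hcost ξ u x h])
    refine ⟨?_, fun k hk => (hu k hk).mono fun ω h => sub_eq_zero.1 h⟩
    obtain ⟨ω, hω⟩ := h0.exists
    simpa [h.2.2.1, hadm.2.2.1, sub_eq_zero] using hω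

/-- verification and uniqueness for the forward LQ problem.  If the
Hamiltonian system (4.6) admits a square-integrable adapted solution `(x̄, ȳ, ū)`, then
for every admissible pair `(ξ, u)` the cost difference equals the quadratic form in the
state/control differences and is nonnegative (so `(ξ̄, ū)` is optimal), and by strict
positive definiteness of `M` and `R_k` the optimal pair is unique. -/
theorem stmt14 (n m N : ℕ)
    {Ω : Type} [m0 : MeasurableSpace Ω] (P : Measure Ω) [IsProbabilityMeasure P]
    (G : ℕ → MeasurableSpace Ω) (hGmono : Monotone G) (hGle : ∀ k, G k ≤ m0)
    (w : ℕ → Ω → ℝ)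
    (hwmeas : ∀ k, Measurable[G (k + 1)] (w k))
    (hw0 : ∀ k, P[w k | G k] =ᵐ[P] 0)
    (hw1 : ∀ k, P[fun ω => w k ω ^ 2 | G k] =ᵐ[P] 1)
    (A Cm : ℕ → Ω → Matrix (Fin n) (Fin n) ℝ)
    (B D : ℕ → Ω → Matrix (Fin n) (Fin m) ℝ)
    (Q : ℕ → Ω → Matrix (Fin n) (Fin n) ℝ) (R : ℕ → Ω → Matrix (Fin m) (Fin m) ℝ)
    (M : Matrix (Fin n) (Fin n) ℝ) (Gm : Ω → Matrix (Fin n) (Fin n) ℝ)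
    (bc σc : ℕ → Ω → Vec n)
    -- adaptedness / boundedness / integrability of the coefficients
    (hAmeas : ∀ k i j, Measurable[G k] (fun ω => A k ω i j))
    (hCmmeas : ∀ k i j, Measurable[G k] (fun ω => Cm k ω i j))
    (hBmeas : ∀ k i j, Measurable[G k] (fun ω => B k ω i j))
    (hDmeas : ∀ k i j, Measurable[G k] (fun ω => D k ω i j))
    (hQmeas : ∀ k i j, Measurable[G k] (fun ω => Q k ω i j))
    (hRmeas : ∀ k i j, Measurable[G k] (fun ω => R k ω i j))
    (hGmmeas : ∀ i j, Measurable[G N] (fun ω => Gm ω i j))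
    (hAbd : ∃ c, ∀ k ω i j, |A k ω i j| ≤ c) (hCmbd : ∃ c, ∀ k ω i j, |Cm k ω i j| ≤ c)
    (hBbd : ∃ c, ∀ k ω i j, |B k ω i j| ≤ c) (hDbd : ∃ c, ∀ k ω i j, |D k ω i j| ≤ c)
    (hQbd : ∃ c, ∀ k ω i j, |Q k ω i j| ≤ c) (hRbd : ∃ c, ∀ k ω i j, |R k ω i j| ≤ c)
    (hGmbd : ∃ c, ∀ ω i j, |Gm ω i j| ≤ c)
    (hbL2 : ∀ k, Measurable[G k] (bc k) ∧ MemLp (bc k) 2 P)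
    (hσL2 : ∀ k, Measurable[G k] (σc k) ∧ MemLp (σc k) 2 P)
    -- definiteness assumptions (Assumption 4.1)
    (hM : M.PosDef)
    (hGm : ∀ ω, (Gm ω).PosSemidef)
    (hQ : ∀ k ω, (Q k ω).PosSemidef)
    (hR : ∃ δ > (0:ℝ), ∀ k ω, (R k ω - δ • 1).PosSemidef)
    -- the solution of the Hamiltonian system (4.6)
    (xb yb : ℕ → Ω → Vec n) (ub : ℕ → Ω → Vec m) (ξb : Vec n)
    (hybad : ∀ k, k ≤ N → Measurable[G k] (yb k) ∧ MemLp (yb k) 2 P)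
    (hadm : AdmissiblePair n m N Ω P G w A Cm B D bc σc ξb ub xb)
    (hinit : ∀ᵐ ω ∂P, xb 0 ω = -ev (M⁻¹.mulVec (yb 0 ω)))
    (hbwd : ∀ k, k < N → ∀ᵐ ω ∂P, yb k ω =
      ev ((A k ω)ᵀ.mulVec ((P[yb (k + 1) | G k]) ω))
      + ev ((Cm k ω)ᵀ.mulVec ((P[fun ω' => w k ω' • yb (k + 1) ω' | G k]) ω))
      + ev ((Q k ω).mulVec (xb k ω)))
    (hterm : ∀ᵐ ω ∂P, yb N ω = ev ((Gm ω).mulVec (xb N ω)))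
    (hstat : ∀ k, k < N → ∀ᵐ ω ∂P, (0 : Vec m) =
      ev ((B k ω)ᵀ.mulVec ((P[yb (k + 1) | G k]) ω))
      + ev ((D k ω)ᵀ.mulVec ((P[fun ω' => w k ω' • yb (k + 1) ω' | G k]) ω))
      + ev ((R k ω).mulVec (ub k ω))) :
    -- conclusion: cost-difference identity, optimality, and uniqueness
    (∀ (ξ : Vec n) (u : ℕ → Ω → Vec m) (x : ℕ → Ω → Vec n),
      AdmissiblePair n m N Ω P G w A Cm B D bc σc ξ u x →
      Jcost n m N Ω P M Gm Q R x u - Jcost n m N Ω P M Gm Q R xb ub =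
        (1 / 2) * ∫ ω,
          (M.mulVec (x 0 ω - xb 0 ω) ⬝ᵥ (x 0 ω - xb 0 ω)
          + (Gm ω).mulVec (x N ω - xb N ω) ⬝ᵥ (x N ω - xb N ω)
          + ∑ k ∈ Finset.range N,
              ((Q k ω).mulVec (x k ω - xb k ω) ⬝ᵥ (x k ω - xb k ω)
              + (R k ω).mulVec (u k ω - ub k ω) ⬝ᵥ (u k ω - ub k ω))) ∂P
      ∧ Jcost n m N Ω P M Gm Q R xb ub ≤ Jcost n m N Ω P M Gm Q R x u)
    ∧ (∀ (ξ : Vec n) (u : ℕ → Ω → Vec m) (x : ℕ → Ω → Vec n),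
      AdmissiblePair n m N Ω P G w A Cm B D bc σc ξ u x →
      Jcost n m N Ω P M Gm Q R x u = Jcost n m N Ω P M Gm Q R xb ub →
      ξ = ξb ∧ ∀ k, k < N → u k =ᵐ[P] ub k) :=
  stmt14_general n m N (m0 := m0) P G hGle w hwmeas hw1 A Cm B D Q R M Gm bc σc hAmeas hCmmeas
    hBmeas hDmeas hQmeas hRmeas hGmmeas hAbd hBbd hQbd hRbd hGmbd hM hGm hQ hR xb yb ub ξb hybad
    hadm hinit hbwd hterm hstat
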